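/- arXiv:math/0507539 — 4 statements merged into one kernel-verified Lean document; each statement's English description precedes it below -/
import Mathlib

section
/- Let A be an infinite sequence of positive integers that can be partitioned into two subsequences A' and A'' with the following two properties: (i) there is a positive integer d such that for every L, S_{A'} contains a finite arithmetic progression of length at least L with common difference d; (ii) writing A'' = (b_1 ≤ b_2 ≤ b_3 ≤ ⋯), for every number K there is an index i(K) such that b_1 + b_2 + ⋯ + b_{i−1} ≥ b_i + K for all i ≥ i(K). Then A is subcomplete, i.e. S_A contains an infinite arithmetic progression. -/
/-- Sums of finitely many terms of the sequence `a` over finite nonempty sets of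
indices lying in `I`. -/
def seqSumsOn (a : ℕ → ℕ) (I : Set ℕ) : Set ℕ :=
  {s | ∃ B : Finset ℕ, B.Nonempty ∧ ↑B ⊆ I ∧ s = ∑ i ∈ B, a i}

open Finset

/-- Gap lemma: if each term is at most the sum of all previous terms (from index `m` on),
then subset sums of `b` over `[m, n)` hit every interval of length `∑_{j<m} b j`. -/
lemma gap_lemma (b : ℕ → ℕ) (m : ℕ)
    (hm : ∀ i, m ≤ i → b i ≤ ∑ j ∈ Finset.range i, b j) :
    ∀ n, m ≤ n → ∀ x, x ≤ ∑ j ∈ Finset.Ico m n, b j →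
    ∃ F ⊆ Finset.Ico m n, x ≤ ∑ j ∈ F, b j ∧ ∑ j ∈ F, b j ≤ x + ∑ j ∈ Finset.range m, b j := by
  intro n hn
  induction n, hn using Nat.le_induction with
  | base =>
    intro x hx
    simp only [Finset.Ico_self, Finset.sum_empty, Nat.le_zero] at hx
    exact ⟨∅, by simp [hx]⟩
  | succ n hn ih =>
    intro x hx
    by_cases h1 : x ≤ ∑ j ∈ Finset.Ico m n, b j
    · obtain ⟨F, hF, h2, h3⟩ := ih x h1
      exact ⟨F, hF.trans (Finset.Ico_subset_Ico_right (Nat.le_succ n)), h2, h3⟩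
    · push_neg at h1
      have hsum : ∑ j ∈ Finset.Ico m (n+1), b j = ∑ j ∈ Finset.Ico m n, b j + b n :=
        Finset.sum_Ico_succ_top hn b
      have hbn : b n ≤ ∑ j ∈ Finset.range m, b j + ∑ j ∈ Finset.Ico m n, b j := by
        have := hm n hn
        rwa [Finset.range_eq_Ico, ← Finset.sum_Ico_consecutive b (Nat.zero_le m) hn,
          ← Finset.range_eq_Ico] at this
      by_cases h2 : x ≤ b n
      · refine ⟨{n}, ?_, ?_, ?_⟩
        · simp [Finset.singleton_subset_iff, Finset.mem_Ico, hn]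
        · simpa using h2
        · simp only [Finset.sum_singleton]
          omega
      · push_neg at h2
        have hx' : x - b n ≤ ∑ j ∈ Finset.Ico m n, b j := by omega
        obtain ⟨F, hF, h3, h4⟩ := ih (x - b n) hx'
        have hnF : n ∉ F := fun hmem => by
          have := hF hmem; simp [Finset.mem_Ico] at this
        refine ⟨insert n F, ?_, ?_, ?_⟩
        · intro j hj
          rcases Finset.mem_insert.mp hj with rfl | hj
          · simp [Finset.mem_Ico, hn]
          · exact (Finset.Ico_subset_Ico_right (Nat.le_succ n)) (hF hj)
        · rw [Finset.sum_insert hnF]; omega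
        · rw [Finset.sum_insert hnF]; omega

/-- Residues of a sum, fiberwise. -/
lemma sum_res (d : ℕ) [NeZero d] (b : ℕ → ℕ) (G : Finset ℕ) :
    ((∑ j ∈ G, b j : ℕ) : ZMod d) =
      ∑ δ : ZMod d, ((G.filter (fun j => ((b j : ℕ) : ZMod d) = δ)).card) • δ := by
  rw [Nat.cast_sum, ← Finset.sum_fiberwise G (fun j => ((b j : ℕ) : ZMod d)) (fun j => ((b j : ℕ) : ZMod d))]
  refine Finset.sum_congr rfl fun δ _ => ?_
  rw [Finset.sum_congr rfl (fun j hj => (Finset.mem_filter.mp hj).2)]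
  simp

/-- Corrector lemma: given `F` disjoint from `window`, if for every residue class occurring
in `F` the window contains at least `d` elements of that class, then we can add a subset `W`
of the window to make the total sum divisible by `d`. -/
lemma corrector (d : ℕ) [NeZero d] (b : ℕ → ℕ) (window F : Finset ℕ)
    (hdisj : Disjoint F window)
    (hcard : ∀ δ : ZMod d,
      0 < (F.filter (fun j => ((b j : ℕ) : ZMod d) = δ)).card →
      d ≤ (window.filter (fun j => ((b j : ℕ) : ZMod d) = δ)).card) :
    ∃ W ⊆ window, Disjoint F W ∧ (d ∣ ∑ j ∈ F ∪ W, b j) := by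
  classical
  set res : ZMod d → ℕ → Prop := fun δ j => ((b j : ℕ) : ZMod d) = δ with hres
  set cnt : Finset ℕ → ZMod d → ℕ := fun G δ => (G.filter (fun j => ((b j : ℕ) : ZMod d) = δ)).card with hcnt
  set nδ : ZMod d → ℕ := fun δ => if 0 < cnt F δ then (d - cnt F δ % d) % d else 0 with hnδ
  have hn_le : ∀ δ, nδ δ ≤ (window.filter (fun j => ((b j : ℕ) : ZMod d) = δ)).card := by
    intro δ
    by_cases h : 0 < cnt F δ
    · have h1 := hcard δ h
      have : nδ δ ≤ d := by simp only [hnδ, if_pos h]; exact le_of_lt (Nat.mod_lt _ (NeZero.pos d))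
      omega
    · simp [hnδ, h]
  have hWδ : ∀ δ : ZMod d, ∃ W ⊆ window.filter (fun j => ((b j : ℕ) : ZMod d) = δ), W.card = nδ δ :=
    fun δ => Finset.exists_subset_card_eq (hn_le δ)
  choose Wδ hWδ_sub hWδ_card using hWδ
  set W : Finset ℕ := Finset.univ.biUnion Wδ with hW
  have hWsub : W ⊆ window := by
    intro j hj
    obtain ⟨δ, _, hj⟩ := Finset.mem_biUnion.mp hj
    exact (Finset.mem_filter.mp (hWδ_sub δ hj)).1
  have hFW : Disjoint F W := hdisj.mono_right hWsub
  refine ⟨W, hWsub, hFW, ?_⟩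
  -- count in W of residue δ is nδ δ
  have hcntW : ∀ δ, cnt W δ = nδ δ := by
    intro δ
    have : W.filter (fun j => ((b j : ℕ) : ZMod d) = δ) = Wδ δ := by
      apply Finset.Subset.antisymm
      · intro j hj
        obtain ⟨hjW, hjres⟩ := Finset.mem_filter.mp hj
        obtain ⟨δ', _, hj'⟩ := Finset.mem_biUnion.mp hjW
        have := (Finset.mem_filter.mp (hWδ_sub δ' hj')).2
        rw [this] at hjres; rw [hjres] at hj'; exact hj'
      · intro j hj
        refine Finset.mem_filter.mpr ⟨Finset.mem_biUnion.mpr ⟨δ, Finset.mem_univ δ, hj⟩,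
          (Finset.mem_filter.mp (hWδ_sub δ hj)).2⟩
    simp only [hcnt, this, hWδ_card]
  have hcntU : ∀ δ, cnt (F ∪ W) δ = cnt F δ + cnt W δ := by
    intro δ
    simp only [hcnt, Finset.filter_union]
    exact Finset.card_union_of_disjoint
      (Finset.disjoint_filter_filter hFW)
  -- divisibility
  have hdall : ∀ δ : ZMod d, d ∣ cnt (F ∪ W) δ := by
    intro δ
    rw [hcntU, hcntW]
    have hd := NeZero.pos d
    by_cases h : 0 < cnt F δ
    · simp only [hnδ, if_pos h]
      have h2 := Nat.div_add_mod (cnt F δ) d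
      rcases Nat.eq_zero_or_pos (cnt F δ % d) with h0 | h0
      · refine ⟨cnt F δ / d, ?_⟩
        rw [h0, Nat.sub_zero, Nat.mod_self]
        omega
      · have hlt : d - cnt F δ % d < d := by omega
        rw [Nat.mod_eq_of_lt hlt]
        generalize hQ : cnt F δ / d = Q at h2
        have hMd : cnt F δ % d < d := Nat.mod_lt _ hd
        generalize hM : cnt F δ % d = M at h0 h2 hMd ⊢
        exact ⟨Q + 1, by rw [Nat.mul_succ]; omega⟩
    · simp only [hnδ, if_neg h]
      exact ⟨0, by omega⟩
  have key : ((∑ j ∈ F ∪ W, b j : ℕ) : ZMod d) = 0 := by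
    rw [sum_res d b (F ∪ W)]
    refine Finset.sum_eq_zero fun δ _ => ?_
    obtain ⟨q, hq⟩ := hdall δ
    have hq' : ((F ∪ W).filter (fun j => ((b j : ℕ) : ZMod d) = δ)).card = d * q := hq
    rw [hq', mul_nsmul, nsmul_eq_mul]
    simp
  exact (ZMod.natCast_eq_zero_iff _ d).mp key

/-- A sequence admitting a good partition is subcomplete.
`I` is the set of indices of the subsequence `A'`, and `e` enumerates the indices of
the complementary subsequence `A''` in such a way that the values `a ∘ e` are
nondecreasing. -/
theorem good_partition_implies_subcomplete
    (a : ℕ → ℕ) (hpos : ∀ i, 0 < a i)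
    (I : Set ℕ) (e : ℕ → ℕ) (he : StrictMono e) (hrange : Set.range e = Iᶜ)
    (hmono : Monotone (a ∘ e))
    (hAP : ∃ d : ℕ, 0 < d ∧ ∀ L : ℕ, ∃ b : ℕ, ∀ k : ℕ, k < L →
      b + k * d ∈ seqSumsOn a I)
    (hgrow : ∀ K : ℕ, ∃ i₀ : ℕ, ∀ i : ℕ, i₀ ≤ i →
      a (e i) + K ≤ ∑ j ∈ Finset.range i, a (e j)) :
    ∃ b r : ℕ, 1 ≤ r ∧ ∀ k : ℕ, b + k * r ∈ seqSumsOn a Set.univ := by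
  classical
  obtain ⟨d, hd, hAP'⟩ := hAP
  haveI : NeZero d := ⟨hd.ne'⟩
  set b : ℕ → ℕ := fun j => a (e j) with hb
  obtain ⟨i₀, hi₀⟩ := hgrow 0
  -- the set of indices whose residue class (of values) is finite, is finite
  have hbad : {j | ¬ ({i | ((b i : ℕ) : ZMod d) = ((b j : ℕ) : ZMod d)}).Infinite}.Finite := by
    have hsub : {j | ¬ ({i | ((b i : ℕ) : ZMod d) = ((b j : ℕ) : ZMod d)}).Infinite} ⊆
        ⋃ δ ∈ {δ : ZMod d | ¬ ({i | ((b i : ℕ) : ZMod d) = δ}).Infinite},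
          {i | ((b i : ℕ) : ZMod d) = δ} := by
      intro j hj
      exact Set.mem_biUnion hj rfl
    refine Set.Finite.subset (Set.Finite.biUnion (Set.toFinite _) ?_) hsub
    intro δ hδ
    exact Set.not_infinite.mp hδ
  obtain ⟨M, hM⟩ := hbad.bddAbove
  set M₀ : ℕ := M + 1 with hM₀
  have hM₀prop : ∀ j, M₀ ≤ j → ({i | ((b i : ℕ) : ZMod d) = ((b j : ℕ) : ZMod d)}).Infinite := by
    intro j hj
    by_contra hcon
    have := hM hcon
    omega
  -- choose witnesses of each infinite residue class above M₀
  have hex : ∀ δ : ZMod d, ∃ T : Finset ℕ,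
      (({i | ((b i : ℕ) : ZMod d) = δ}).Infinite →
        (↑T ⊆ {i | M₀ ≤ i ∧ ((b i : ℕ) : ZMod d) = δ} ∧ T.card = d)) := by
    intro δ
    by_cases h : ({i | ((b i : ℕ) : ZMod d) = δ}).Infinite
    · have hinf : ({i | M₀ ≤ i ∧ ((b i : ℕ) : ZMod d) = δ}).Infinite := by
        have := h.diff (Set.finite_lt_nat M₀)
        refine this.mono ?_
        intro i hi
        simp only [Set.mem_diff, Set.mem_setOf_eq, Set.mem_setOf_eq, not_lt] at hi ⊢
        exact ⟨hi.2, hi.1⟩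
      obtain ⟨T, hT1, hT2⟩ := hinf.exists_subset_card_eq d
      exact ⟨T, fun _ => ⟨hT1, hT2⟩⟩
    · exact ⟨∅, fun h' => absurd h' h⟩
  choose T hT using hex
  set m' : ℕ := max (max i₀ M₀) ((Finset.univ.sup (fun δ : ZMod d => (T δ).sup id)) + 1) with hm'
  have hm'i₀ : i₀ ≤ m' := le_trans (le_max_left _ _) (le_max_left _ _)
  have hm'M₀ : M₀ ≤ m' := le_trans (le_max_right _ _) (le_max_left _ _)
  set window : Finset ℕ := Finset.Ico M₀ m' with hwindow
  -- window property
  have hwin : ∀ δ : ZMod d, ({i | ((b i : ℕ) : ZMod d) = δ}).Infinite →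
      d ≤ (window.filter (fun j => ((b j : ℕ) : ZMod d) = δ)).card := by
    intro δ hδ
    obtain ⟨hsub, hcard⟩ := hT δ hδ
    refine le_trans (le_of_eq hcard.symm) (Finset.card_le_card ?_)
    intro j hj
    have hj1 := hsub hj
    simp only [Set.mem_setOf_eq] at hj1
    refine Finset.mem_filter.mpr ⟨Finset.mem_Ico.mpr ⟨hj1.1, ?_⟩, hj1.2⟩
    have : j ≤ (Finset.univ.sup (fun δ : ZMod d => (T δ).sup id)) := by
      refine le_trans ?_ (Finset.le_sup (Finset.mem_univ δ))
      exact Finset.le_sup (f := id) hj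
    omega
  -- the gap bound
  set g : ℕ := ∑ j ∈ Finset.range m', b j with hg
  set C : ℕ := ∑ j ∈ window, b j with hC
  set G₀ : ℕ := g + C with hG₀
  obtain ⟨c, hc⟩ := hAP' (G₀ + 1)
  refine ⟨c + G₀ * d, d, hd, fun k => ?_⟩
  -- find the tail subset sum t ∈ [k*d, k*d + g]
  have hmhyp : ∀ i, m' ≤ i → b i ≤ ∑ j ∈ Finset.range i, b j := by
    intro i hi
    have := hi₀ i (le_trans hm'i₀ hi)
    simpa using this
  have hxle : k * d ≤ ∑ j ∈ Finset.Ico m' (m' + k * d), b j := by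
    have h1 : (Finset.Ico m' (m' + k * d)).card • 1 ≤ ∑ j ∈ Finset.Ico m' (m' + k * d), b j :=
      Finset.card_nsmul_le_sum _ _ _ (fun x _ => hpos (e x))
    simpa using h1
  obtain ⟨F, hFsub, hFlb, hFub⟩ := gap_lemma b m' hmhyp (m' + k * d) (Nat.le_add_right _ _) (k * d) hxle
  -- corrector
  have hdisjFW : Disjoint F window := by
    rw [Finset.disjoint_left]
    intro j hjF hjW
    have h1 := (Finset.mem_Ico.mp (hFsub hjF)).1
    have h2 := (Finset.mem_Ico.mp hjW).2
    omega
  have hcardhyp : ∀ δ : ZMod d,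
      0 < (F.filter (fun j => ((b j : ℕ) : ZMod d) = δ)).card →
      d ≤ (window.filter (fun j => ((b j : ℕ) : ZMod d) = δ)).card := by
    intro δ hpos'
    obtain ⟨j, hj⟩ := Finset.card_pos.mp hpos'
    obtain ⟨hjF, hjres⟩ := Finset.mem_filter.mp hj
    have hjM₀ : M₀ ≤ j := by
      have := (Finset.mem_Ico.mp (hFsub hjF)).1
      omega
    have := hM₀prop j hjM₀
    rw [hjres] at this
    exact hwin δ this
  obtain ⟨W, hWsub, hFWdisj, hdvd⟩ := corrector d b window F hdisjFW hcardhyp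
  -- the total correction sum s
  set s : ℕ := ∑ j ∈ F ∪ W, b j with hs
  have hsplit : s = ∑ j ∈ F, b j + ∑ j ∈ W, b j := Finset.sum_union hFWdisj
  have hWle : ∑ j ∈ W, b j ≤ C := Finset.sum_le_sum_of_subset hWsub
  have hslb : k * d ≤ s := by omega
  have hsub' : s ≤ k * d + G₀ := by omega
  obtain ⟨v, hv⟩ : ∃ v, s = k * d + d * v := by
    obtain ⟨u, hu⟩ := Nat.exists_eq_add_of_le hslb
    obtain ⟨v, hv⟩ : d ∣ u := by
      have h1 : d ∣ k * d := Dvd.intro_left k rfl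
      have : d ∣ k * d + u := hu ▸ hdvd
      exact (Nat.dvd_add_right h1).mp this
    exact ⟨v, by omega⟩
  have hvle : v ≤ G₀ := by
    have : d * v ≤ G₀ := by omega
    calc v ≤ d * v := Nat.le_mul_of_pos_left v hd
    _ ≤ G₀ := this
  -- the AP element
  obtain ⟨Bp, hBpne, hBpI, hBpsum⟩ := hc (G₀ - v) (by omega)
  set Bq : Finset ℕ := (F ∪ W).image e with hBq
  have hBqIc : ↑Bq ⊆ Iᶜ := by
    intro x hx
    obtain ⟨j, _, rfl⟩ := Finset.mem_image.mp hx
    rw [← hrange]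
    exact Set.mem_range_self j
  have hdisjB : Disjoint Bp Bq := by
    rw [Finset.disjoint_left]
    intro x hx hx'
    exact hBqIc hx' (hBpI hx)
  refine ⟨Bp ∪ Bq, hBpne.mono Finset.subset_union_left, by simp, ?_⟩
  rw [Finset.sum_union hdisjB]
  have hBqsum : ∑ x ∈ Bq, a x = s := by
    rw [hBq, Finset.sum_image (fun x _ y _ h => he.injective h)]
  rw [hBqsum, ← hBpsum, hv]
  have harith : (G₀ - v) * d + v * d = G₀ * d := by
    rw [← Nat.add_mul, Nat.sub_add_cancel hvle]
  have : d * v = v * d := Nat.mul_comm d v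
  omega
end

section
/- There exists N₀ such that for every finite set A of real numbers with |A| ≥ N₀, there is a subset B ⊆ A of even cardinality |B| = 2T with 2T ≤ 20·log₂|A| such that the set T*B, consisting of all sums of T pairwise distinct elements of B, has cardinality at least |A|. -/
/-- `T*B` for real numbers: sums of `T` pairwise distinct elements of `B`. -/
def distinctSumR (B : Set ℝ) (T : ℕ) : Set ℝ :=
  {s | ∃ f : Fin T → ℝ, Function.Injective f ∧ (∀ i, f i ∈ B) ∧ s = ∑ i, f i}

/-!
Grow `B ⊆ A` two elements at a time, keeping `|B| = 2t`, and let `S` be the set of sums of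
`t`-element subsets of `B`. Adding `r, b ∈ A \ B` gives a sum set containing `(r + S) ∪ (b + S)`,
so it grows by a factor `11/10` unless `|S ∩ ((b - r) + S)| > 9|S|/10` for every such `b`. In that
case every shift `e = (b - r) + (b' - r)` still has overlap `> 8|S|/10`; by Cauchy–Davenport there
are at least `2|A \ B| - 3` such shifts, while the overlaps over any set of shifts sum to at most
`|S|²`. Hence `|S| ≥ |A|` as long as `t` is small, and growth by `11/10` per step reaches `|A|`
after `O(log |A|)` steps.
-/

open Finset
open scoped Pointwise

section Overlap

variable {G : Type*} [AddGroup G] [DecidableEq G]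

lemma card_inter_vadd_add_card_inter_vadd_le (S : Finset G) (d d' : G) :
    #(S ∩ (d +ᵥ S)) + #(S ∩ (d' +ᵥ S)) ≤ #S + #(S ∩ ((d + d') +ᵥ S)) := by
  set X := S ∩ (d +ᵥ S)
  set Y := (d +ᵥ S) ∩ ((d + d') +ᵥ S)
  have hY : #Y = #(S ∩ (d' +ᵥ S)) := by
    rw [show Y = d +ᵥ (S ∩ (d' +ᵥ S)) by rw [vadd_finset_inter, vadd_vadd], card_vadd_finset]
  have hunion : #(X ∪ Y) ≤ #S := by
    rw [← card_vadd_finset d S]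
    exact card_le_card (union_subset inter_subset_right inter_subset_left)
  have hinter : #(X ∩ Y) ≤ #(S ∩ ((d + d') +ᵥ S)) :=
    card_le_card fun x hx ↦ by simp_all [X, Y]
  have := card_union_add_card_inter X Y
  omega

lemma sum_card_inter_vadd_le (S E : Finset G) :
    ∑ e ∈ E, #(S ∩ (e +ᵥ S)) ≤ #S * #S := by
  simp_rw [card_inter_vadd, ← card_add_neg_eq_addConvolution_neg,
    sum_card_fiberwise_eq_card_filter, ← card_product]
  exact card_filter_le _ _

lemma four_mul_card_lt_five_mul_card {S E : Finset G} (hE : E.Nonempty)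
    (h : ∀ e ∈ E, 4 * #S < 5 * #(S ∩ (e +ᵥ S))) : 4 * #E < 5 * #S := by
  have hsum : #S * (4 * #E) < #S * (5 * #S) :=
    calc #S * (4 * #E) = ∑ _e ∈ E, 4 * #S := by rw [sum_const, smul_eq_mul]; ring
      _ < ∑ e ∈ E, 5 * #(S ∩ (e +ᵥ S)) := sum_lt_sum_of_nonempty hE h
      _ = 5 * ∑ e ∈ E, #(S ∩ (e +ᵥ S)) := by rw [mul_sum]
      _ ≤ #S * (5 * #S) := by linarith [sum_card_inter_vadd_le S E]
  exact Nat.lt_of_mul_lt_mul_left hsum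

lemma eight_mul_card_lt_five_mul_card_add_twelve [IsAddTorsionFree G] {S R : Finset G} {r : G}
    (hr : r ∈ R) (h : ∀ b ∈ R.erase r, 9 * #S < 10 * #(S ∩ ((b - r) +ᵥ S))) :
    8 * #R < 5 * #S + 12 := by
  set D := (R.erase r).image (· - r)
  have hD : #D = #R - 1 := by
    rw [card_image_of_injective _ (sub_left_injective), card_erase_of_mem hr]
  rcases D.eq_empty_or_nonempty with hD₀ | hD₀
  · have : #R ≤ 1 := by rw [hD₀, card_empty] at hD; omega
    omega
  have hDD : #D + #D - 1 ≤ #(D + D) := cauchy_davenport_of_isAddTorsionFree hD₀ hD₀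
  have hlarge : ∀ e ∈ D + D, 4 * #S < 5 * #(S ∩ (e +ᵥ S)) := by
    rintro _ he
    obtain ⟨_, hd, _, hd', rfl⟩ := mem_add.1 he
    obtain ⟨b, hb, rfl⟩ := mem_image.1 hd
    obtain ⟨b', hb', rfl⟩ := mem_image.1 hd'
    have := card_inter_vadd_add_card_inter_vadd_le S (b - r) (b' - r)
    have := h b hb
    have := h b' hb'
    omega
  have := four_mul_card_lt_five_mul_card (hD₀.add hD₀) hlarge
  omega

end Overlap

section SubsetSums

variable {G : Type*} [AddCommMonoid G] [DecidableEq G]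

def subsetSums (B : Finset G) (t : ℕ) : Finset G :=
  (B.powersetCard t).image fun C ↦ ∑ x ∈ C, x

lemma subsetSums_zero (B : Finset G) : subsetSums B 0 = {0} := by
  simp [subsetSums]

lemma subsetSums_mono {B B' : Finset G} (h : B ⊆ B') (t : ℕ) :
    subsetSums B t ⊆ subsetSums B' t :=
  image_subset_image (powersetCard_mono h)

lemma vadd_subsetSums_subset {B : Finset G} {a : G} (ha : a ∉ B) (t : ℕ) :
    a +ᵥ subsetSums B t ⊆ subsetSums (insert a B) (t + 1) := by
  rintro _ hs
  obtain ⟨_, hsum, rfl⟩ := mem_vadd_finset.1 hs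
  obtain ⟨C, hC, rfl⟩ := mem_image.1 hsum
  obtain ⟨hCB, rfl⟩ := mem_powersetCard.1 hC
  have haC : a ∉ C := fun h ↦ ha (hCB h)
  refine mem_image.2 ⟨insert a C, mem_powersetCard.2 ⟨insert_subset_insert a hCB, ?_⟩, ?_⟩
  · rw [card_insert_of_notMem haC]
  · rw [sum_insert haC, vadd_eq_add]

end SubsetSums

section Growth

variable {G : Type*} [AddCommGroup G] [DecidableEq G]

lemma two_mul_card_subsetSums_le {B : Finset G} {a b : G} (ha : a ∉ B) (hb : b ∉ B) (t : ℕ) :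
    2 * #(subsetSums B t) ≤ #(subsetSums (insert a (insert b B)) (t + 1)) +
      #(subsetSums B t ∩ ((b - a) +ᵥ subsetSums B t)) := by
  set S := subsetSums B t
  have hsub : (a +ᵥ S) ∪ (b +ᵥ S) ⊆ subsetSums (insert a (insert b B)) (t + 1) := by
    refine union_subset ?_ ?_
    · exact (vadd_subsetSums_subset ha t).trans
        (subsetSums_mono (insert_subset_insert a (subset_insert b B)) _)
    · rw [insert_comm]
      exact (vadd_subsetSums_subset hb t).trans
        (subsetSums_mono (insert_subset_insert b (subset_insert a B)) _)
  have hinter : #((a +ᵥ S) ∩ (b +ᵥ S)) = #(S ∩ ((b - a) +ᵥ S)) := by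
    rw [← card_vadd_finset (-a), vadd_finset_inter, neg_vadd_vadd, vadd_vadd, neg_add_eq_sub]
  have := card_union_add_card_inter (a +ᵥ S) (b +ᵥ S)
  have := card_le_card hsub
  rw [card_vadd_finset, card_vadd_finset] at *
  omega

lemma exists_subset_subsetSums_growth_step [IsAddTorsionFree G] {A B : Finset G} {t : ℕ}
    (hBA : B ⊆ A) (hB : #B = 2 * t) (hA : 16 * t + 11 ≤ 3 * #A)
    (hS : #(subsetSums B t) < #A) :
    ∃ B' ⊆ A, #B' = 2 * (t + 1) ∧ 11 * #(subsetSums B t) ≤ 10 * #(subsetSums B' (t + 1)) := by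
  set S := subsetSums B t
  have hR : #(A \ B) = #A - 2 * t := by rw [card_sdiff_of_subset hBA, hB]
  obtain ⟨r, hr⟩ : (A \ B).Nonempty := card_pos.1 (by omega)
  by_cases hgrow : ∃ b ∈ (A \ B).erase r, 10 * #(S ∩ ((b - r) +ᵥ S)) ≤ 9 * #S
  · obtain ⟨b, hb, hbS⟩ := hgrow
    obtain ⟨hbr, hbA, hbB⟩ : b ≠ r ∧ b ∈ A ∧ b ∉ B := by simp_all
    obtain ⟨hrA, hrB⟩ : r ∈ A ∧ r ∉ B := by simp_all
    refine ⟨insert r (insert b B), insert_subset hrA (insert_subset hbA hBA), ?_, ?_⟩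
    · rw [card_insert_of_notMem (by simp [hbr.symm, hrB]), card_insert_of_notMem hbB, hB]
      ring
    · have : 2 * #S ≤ _ + #(S ∩ ((b - r) +ᵥ S)) := two_mul_card_subsetSums_le hrB hbB t
      omega
  · push Not at hgrow
    have := eight_mul_card_lt_five_mul_card_add_twelve hr hgrow
    omega

lemma exists_subset_subsetSums_growth [IsAddTorsionFree G] (A : Finset G) (t : ℕ)
    (ht : 16 * t ≤ 3 * #A + 5) :
    ∃ B ⊆ A, ∃ T ≤ t, #B = 2 * T ∧
      (#A ≤ #(subsetSums B T) ∨ 11 ^ t ≤ 10 ^ t * #(subsetSums B T)) := by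
  induction t with
  | zero => exact ⟨∅, empty_subset A, 0, le_rfl, rfl, .inr (by simp [subsetSums_zero])⟩
  | succ t ih =>
    obtain ⟨B, hBA, T, hT, hB, hS⟩ := ih (by omega)
    by_cases hdone : #A ≤ #(subsetSums B T)
    · exact ⟨B, hBA, T, hT.trans t.le_succ, hB, .inl hdone⟩
    have hgrowth : 11 ^ t ≤ 10 ^ t * #(subsetSums B T) := hS.resolve_left hdone
    obtain ⟨B', hB'A, hB', hS'⟩ :=
      exists_subset_subsetSums_growth_step hBA hB (by omega) (not_le.1 hdone)
    refine ⟨B', hB'A, T + 1, by omega, hB', .inr ?_⟩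
    calc 11 ^ (t + 1) = 11 * 11 ^ t := by ring
      _ ≤ 11 * (10 ^ t * #(subsetSums B T)) := by gcongr
      _ = 10 ^ t * (11 * #(subsetSums B T)) := by ring
      _ ≤ 10 ^ t * (10 * #(subsetSums B' (T + 1))) := by gcongr
      _ = 10 ^ (t + 1) * #(subsetSums B' (T + 1)) := by ring

end Growth

lemma mul_add_le_three_mul_two_pow {L : ℕ} (hL : 9 ≤ L) : 128 * L + 123 ≤ 3 * 2 ^ L := by
  induction L, hL using Nat.le_induction with
  | base => norm_num
  | succ n _ ih => rw [pow_succ]; omega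

lemma mul_lt_eleven_pow (n : ℕ) :
    10 ^ (8 * (Nat.log 2 n + 1)) * n < 11 ^ (8 * (Nat.log 2 n + 1)) := by
  set m := Nat.log 2 n + 1
  have hn : n < 2 ^ m := Nat.lt_pow_succ_log_self one_lt_two n
  calc 10 ^ (8 * m) * n < 10 ^ (8 * m) * 2 ^ m := by gcongr
    _ = (2 * 10 ^ 8) ^ m := by rw [mul_pow, pow_mul, mul_comm]
    _ ≤ (11 ^ 8) ^ m := by gcongr; norm_num -- `(11/10)^8 ≈ 2.14`
    _ = 11 ^ (8 * m) := by rw [pow_mul]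

lemma distinctSumR_eq_subsetSums (B : Finset ℝ) (T : ℕ) :
    distinctSumR B T = subsetSums B T := by
  ext s
  simp only [distinctSumR, subsetSums, coe_image, Set.mem_image, mem_coe, mem_powersetCard,
    Set.mem_ofPred_eq]
  constructor
  · rintro ⟨f, hf, hfB, rfl⟩
    refine ⟨univ.map ⟨f, hf⟩, ⟨fun x hx ↦ ?_, by simp⟩, by simp⟩
    obtain ⟨i, -, rfl⟩ := mem_map.1 hx
    exact hfB i
  · rintro ⟨C, ⟨hCB, hC⟩, rfl⟩
    set e := C.orderIsoOfFin hC
    refine ⟨fun i ↦ e i, fun i j hij ↦ e.injective (Subtype.ext hij), fun i ↦ hCB (e i).2, ?_⟩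
    rw [← sum_coe_sort C]
    exact (Fintype.sum_equiv e.toEquiv _ _ fun _ ↦ rfl).symm

theorem small_set_with_big_sums :
    ∃ N₀ : ℕ, ∀ A : Finset ℝ, N₀ ≤ A.card →
      ∃ (B : Finset ℝ) (T : ℕ), B ⊆ A ∧ B.card = 2 * T ∧
        ((2 * T : ℕ) : ℝ) ≤ 20 * Real.logb 2 A.card ∧
        A.card ≤ (distinctSumR (↑B) T).ncard := by
  refine ⟨512, fun A hA ↦ ?_⟩
  set L := Nat.log 2 #A
  have hL : 9 ≤ L := Nat.le_log_of_pow_le one_lt_two (by norm_num; omega)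
  have hA' : 16 * (8 * (L + 1)) ≤ 3 * #A + 5 := by
    have := mul_add_le_three_mul_two_pow hL
    have : 2 ^ L ≤ #A := Nat.pow_log_le_self 2 (by omega)
    omega
  obtain ⟨B, hBA, T, hT, hB, hsums⟩ := exists_subset_subsetSums_growth A _ hA'
  refine ⟨B, T, hBA, hB, ?_, ?_⟩
  · have hlog : (L : ℝ) ≤ Real.logb 2 #A := Real.natLog_le_logb _ _
    have hT' : (T : ℝ) ≤ 8 * (L + 1) := by exact_mod_cast hT
    have hL' : (9 : ℝ) ≤ L := by exact_mod_cast hL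
    push_cast
    linarith
  · rw [distinctSumR_eq_subsetSums, Set.ncard_coe_finset]
    refine hsums.elim id fun h ↦ ?_
    exact (Nat.lt_of_mul_lt_mul_left ((mul_lt_eleven_pow #A).trans_le h)).le
end

section
/- For every positive constant ε and every positive integer d there exists a positive integer g such that the following holds: let Q = {x_1·a_1 + ⋯ + x_d·a_d : x_i ∈ ℤ, 0 ≤ x_i ≤ n_i} be a generalized arithmetic progression of rank d with all n_i ≥ 1 which is not proper. Then the g-fold dilate gQ = {x_1·a_1 + ⋯ + x_d·a_d : 0 ≤ x_i ≤ g·n_i} satisfies |gQ| ≤ ε·Vol(gQ) = ε·g^d·n_1⋯n_d. Moreover, for any such non-proper Q one has |2Q| ≤ (1 − 2^{−(d+1)})·∏_{i=1}^d (2n_i + 1), where 2Q = {x_1·a_1 + ⋯ + x_d·a_d : 0 ≤ x_i ≤ 2n_i}. -/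
/-- The (normal) GAP `{x₁a₁ + ⋯ + x_d a_d : 0 ≤ xᵢ ≤ dims i}` as a set of integers. -/
def gapSet (d : ℕ) (steps : Fin d → ℤ) (dims : Fin d → ℕ) : Set ℤ :=
  (fun x : Fin d → ℕ => ∑ i, (x i : ℤ) * steps i) '' {x | ∀ i, x i ≤ dims i}

lemma gapSet_eq (d : ℕ) (steps : Fin d → ℤ) (m : Fin d → ℕ) :
    gapSet d steps m =
      (fun x : Fin d → ℤ => ∑ i, x i * steps i) ''
        (Set.Icc 0 (fun i => (m i : ℤ))) := by
  ext z
  constructor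
  · rintro ⟨x, hx, rfl⟩
    refine ⟨fun i => (x i : ℤ), ?_, rfl⟩
    rw [Set.mem_Icc]
    refine ⟨fun i => ?_, fun i => ?_⟩ <;> simp only [Pi.zero_apply]
    · exact Int.natCast_nonneg _
    · exact_mod_cast hx i
  · rintro ⟨y, hy, rfl⟩
    rw [Set.mem_Icc] at hy
    refine ⟨fun i => (y i).toNat, fun i => ?_, ?_⟩
    · have h1 := hy.1 i
      have h2 : y i ≤ (m i : ℤ) := hy.2 i
      simp only [Pi.zero_apply] at h1
      show (y i).toNat ≤ m i
      omega
    · simp only []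
      congr 1
      funext i
      congr 1
      have h1 := hy.1 i
      simp only [Pi.zero_apply] at h1
      rw [Int.toNat_of_nonneg h1]

lemma counting (d : ℕ) (steps : Fin d → ℤ) (m : Fin d → ℕ) (v : Fin d → ℤ)
    (hv0 : v ≠ 0) (hvm : ∀ i, (v i).natAbs ≤ m i)
    (hvs : ∑ i, v i * steps i = 0) :
    (gapSet d steps m).ncard ≤ ∏ i, (m i + 1) - ∏ i, (m i + 1 - (v i).natAbs) := by
  classical
  set M : Fin d → ℤ := fun i => (m i : ℤ) with hM
  set F : (Fin d → ℤ) → ℤ := fun x => ∑ i, x i * steps i with hF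
  set B : Finset (Fin d → ℤ) := Finset.Icc 0 M with hB
  set lo : Fin d → ℤ := fun i => max 0 (-(v i)) with hlo
  set hi : Fin d → ℤ := fun i => min (M i) (M i - v i) with hhi
  set T : Finset (Fin d → ℤ) := Finset.Icc lo hi with hT
  -- membership characterizations
  have memB : ∀ x : Fin d → ℤ, x ∈ B ↔ ∀ i, 0 ≤ x i ∧ x i ≤ M i := by
    intro x
    rw [hB, Finset.mem_Icc, Pi.le_def, Pi.le_def, ← forall_and]
    exact forall_congr' fun i => by simp
  have memT : ∀ x : Fin d → ℤ,
      x ∈ T ↔ ∀ i, (0 ≤ x i ∧ x i ≤ M i) ∧ (0 ≤ x i + v i ∧ x i + v i ≤ M i) := by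
    intro x
    rw [hT, Finset.mem_Icc, Pi.le_def, Pi.le_def, ← forall_and]
    refine forall_congr' fun i => ?_
    simp only [hlo, hhi]
    omega
  have hTB : T ⊆ B := by
    intro x hx
    rw [memT] at hx
    rw [memB]
    exact fun i => (hx i).1
  -- F is translation invariant under adding v  (k times)
  have hFshift : ∀ (x : Fin d → ℤ) (k : ℤ), F (x + k • v) = F x + k * ∑ i, v i * steps i := by
    intro x k
    simp only [hF, Pi.add_apply, Pi.smul_apply, smul_eq_mul, add_mul, Finset.sum_add_distrib,
      Finset.mul_sum, mul_assoc]
  -- key: gapSet ⊆ F '' (B \ T)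
  have key : gapSet d steps m ⊆ F '' (↑(B \ T) : Set (Fin d → ℤ)) := by
    rw [gapSet_eq]
    rintro z ⟨x, hx, rfl⟩
    rw [Set.mem_Icc] at hx
    set K : Set ℕ := {k : ℕ | x + (k : ℤ) • v ∈ B} with hK
    have h0K : (0 : ℕ) ∈ K := by
      rw [hK, Set.mem_setOf_eq]
      simpa [memB, Pi.le_def] using
        (fun i => ⟨hx.1 i, hx.2 i⟩ : ∀ i, 0 ≤ x i ∧ x i ≤ M i)
    obtain ⟨i0, hi0⟩ : ∃ i, v i ≠ 0 := by
      by_contra h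
      push_neg at h
      exact hv0 (funext h)
    have hbdd : BddAbove K := by
      refine ⟨(M i0).toNat, fun k hk => ?_⟩
      rw [hK, Set.mem_setOf_eq, memB] at hk
      obtain ⟨h1, h2⟩ := hk i0
      simp only [Pi.add_apply, Pi.smul_apply, smul_eq_mul] at h1 h2
      have h3 : 0 ≤ x i0 := hx.1 i0
      have h4 : x i0 ≤ M i0 := hx.2 i0
      have h5 : (k : ℤ) ≤ M i0 := by
        rcases lt_or_gt_of_ne hi0 with h | h
        · nlinarith
        · nlinarith
      have h6 : (0 : ℤ) ≤ M i0 := le_trans h3 h4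
      exact (Int.le_toNat h6).mpr h5
    set k0 : ℕ := sSup K with hk0
    have hk0K : k0 ∈ K := Nat.sSup_mem ⟨0, h0K⟩ hbdd
    have hk1K : k0 + 1 ∉ K := fun h => by
      have := le_csSup hbdd h
      omega
    set y : Fin d → ℤ := x + (k0 : ℤ) • v with hy
    refine ⟨y, ?_, ?_⟩
    · rw [Finset.coe_sdiff, Set.mem_diff]
      constructor
      · exact hk0K
      · intro hyT
        apply hk1K
        rw [hK, Set.mem_setOf_eq]
        have : x + ((k0 + 1 : ℕ) : ℤ) • v = y + v := by
          rw [hy]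
          push_cast
          rw [add_smul, one_smul, add_assoc]
        rw [this]
        rw [Finset.mem_coe, memT] at hyT
        rw [memB]
        intro i
        have := (hyT i).2
        simpa using this
    · rw [hFshift, hvs, mul_zero, add_zero]
  -- cardinalities
  have hfin : ((↑(B \ T) : Set (Fin d → ℤ))).Finite := (B \ T).finite_toSet
  have step1 : (gapSet d steps m).ncard ≤ (B \ T).card := by
    calc (gapSet d steps m).ncard ≤ (F '' (↑(B \ T) : Set (Fin d → ℤ))).ncard :=
          Set.ncard_le_ncard key (hfin.image F)
      _ ≤ (↑(B \ T) : Set (Fin d → ℤ)).ncard := Set.ncard_image_le hfin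
      _ = (B \ T).card := Set.ncard_coe_finset _
  have cardB : B.card = ∏ i, (m i + 1) := by
    rw [hB, Pi.card_Icc]
    refine Finset.prod_congr rfl fun i _ => ?_
    rw [Int.card_Icc]
    simp only [hM, Pi.zero_apply]
    omega
  have cardT : T.card = ∏ i, (m i + 1 - (v i).natAbs) := by
    rw [hT, Pi.card_Icc]
    refine Finset.prod_congr rfl fun i _ => ?_
    rw [Int.card_Icc]
    have := hvm i
    simp only [hlo, hhi, hM]
    omega
  rw [Finset.card_sdiff_of_subset hTB, cardB, cardT] at step1
  exact step1

lemma pow_sub_pow_le' (a b : ℝ) (hb : 0 ≤ b) (hab : b ≤ a) :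
    ∀ n : ℕ, a ^ (n + 1) - b ^ (n + 1) ≤ (n + 1 : ℝ) * (a - b) * a ^ n := by
  intro n
  induction n with
  | zero => simp
  | succ n ih =>
    have ha : 0 ≤ a := le_trans hb hab
    have hba : b ^ (n + 1) ≤ a ^ (n + 1) := pow_le_pow_left₀ hb hab (n + 1)
    have han : 0 ≤ a ^ n := pow_nonneg ha n
    have h1 : a ^ (n + 2) - b ^ (n + 2)
        = a * (a ^ (n + 1) - b ^ (n + 1)) + (a - b) * b ^ (n + 1) := by ring
    have h2 : a * (a ^ (n + 1) - b ^ (n + 1)) ≤ a * ((n + 1 : ℝ) * (a - b) * a ^ n) :=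
      mul_le_mul_of_nonneg_left ih ha
    have h3 : (a - b) * b ^ (n + 1) ≤ (a - b) * a ^ (n + 1) :=
      mul_le_mul_of_nonneg_left hba (by linarith)
    calc a ^ (n + 2) - b ^ (n + 2)
        ≤ a * ((n + 1 : ℝ) * (a - b) * a ^ n) + (a - b) * a ^ (n + 1) := by
          rw [h1]; exact add_le_add h2 h3
      _ = ((n + 1 : ℕ) + 1 : ℝ) * (a - b) * a ^ (n + 1) := by push_cast; ring

theorem nonproper_GAP_lemma (ε : ℝ) (hε : 0 < ε) (d : ℕ) (hd : 0 < d) :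
    ∃ g : ℕ, 0 < g ∧
      ∀ (steps : Fin d → ℤ) (dims : Fin d → ℕ),
        (∀ i, 1 ≤ dims i) →
        ¬ Set.InjOn (fun x : Fin d → ℕ => ∑ i, (x i : ℤ) * steps i)
            {x | ∀ i, x i ≤ dims i} →
        (((gapSet d steps (fun i => g * dims i)).ncard : ℝ) ≤
            ε * (g : ℝ) ^ d * ∏ i, (dims i : ℝ)) ∧
        (((gapSet d steps (fun i => 2 * dims i)).ncard : ℝ) ≤
            (1 - (2 : ℝ) ^ (-(d + 1 : ℤ))) * ∏ i, (2 * (dims i : ℝ) + 1)) := by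
  classical
  set g : ℕ := ⌈(d : ℝ) * 2 ^ d / ε⌉₊ + 1 with hg
  have hg0 : 0 < g := Nat.succ_pos _
  have hg1 : 1 ≤ g := hg0
  refine ⟨g, hg0, ?_⟩
  intro steps dims hdims hninj
  -- extract the nonzero relation vector v
  rw [Set.InjOn] at hninj
  push_neg at hninj
  obtain ⟨x, hx, y, hy, hxy, hne⟩ := hninj
  simp only [Set.mem_setOf_eq] at hx hy
  set v : Fin d → ℤ := fun i => (x i : ℤ) - (y i : ℤ) with hv
  have hv0 : v ≠ 0 := by
    intro h
    apply hne
    funext i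
    have := congrFun h i
    simp only [hv, Pi.zero_apply, sub_eq_zero] at this
    exact_mod_cast this
  have hvdims : ∀ i, (v i).natAbs ≤ dims i := by
    intro i
    have h1 := hx i
    have h2 := hy i
    simp only [hv]
    omega
  have hvs : ∑ i, v i * steps i = 0 := by
    simp only [hv, sub_mul, Finset.sum_sub_distrib, hxy, sub_self]
  have hprodpos : (0 : ℝ) ≤ ∏ i, (dims i : ℝ) :=
    Finset.prod_nonneg fun i _ => by positivity
  constructor
  · -- first bound
    have hvm1 : ∀ i, (v i).natAbs ≤ g * dims i := fun i =>
      le_trans (hvdims i) (Nat.le_mul_of_pos_left _ hg0)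
    have count1 := counting d steps (fun i => g * dims i) v hv0 hvm1 hvs
    set A : ℕ := ∏ i, (g * dims i + 1) with hA
    set C : ℕ := ∏ i, (g * dims i + 1 - (v i).natAbs) with hC
    set D : ℕ := ∏ i, ((g - 1) * dims i + 1) with hD
    have hDC : D ≤ C := by
      refine Finset.prod_le_prod' fun i _ => ?_
      have h1 := hvdims i
      have e : g * dims i = (g - 1) * dims i + dims i := by
        conv_lhs => rw [show g = (g - 1) + 1 by omega]
        rw [Nat.succ_mul]
      generalize (g - 1) * dims i = t at e ⊢
      omega
    have hCA : C ≤ A := Finset.prod_le_prod' fun i _ => Nat.sub_le _ _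
    have hDA : D ≤ A := le_trans hDC hCA
    have step : (gapSet d steps (fun i => g * dims i)).ncard ≤ A - D :=
      le_trans count1 (Nat.sub_le_sub_left hDC A)
    have stepR : ((gapSet d steps (fun i => g * dims i)).ncard : ℝ) ≤ (A : ℝ) - (D : ℝ) := by
      calc ((gapSet d steps (fun i => g * dims i)).ncard : ℝ) ≤ ((A - D : ℕ) : ℝ) :=
            Nat.cast_le.mpr step
        _ = (A : ℝ) - (D : ℝ) := by rw [Nat.cast_sub hDA]
    have hAR : (A : ℝ) ≤ ((g : ℝ) + 1) ^ d * ∏ i, (dims i : ℝ) := by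
      have : (A : ℝ) = ∏ i, ((g : ℝ) * (dims i : ℝ) + 1) := by
        rw [hA, Nat.cast_prod]
        exact Finset.prod_congr rfl fun i _ => by push_cast; ring
      rw [this]
      calc ∏ i, ((g : ℝ) * (dims i : ℝ) + 1)
          ≤ ∏ i, (((g : ℝ) + 1) * (dims i : ℝ)) := by
            refine Finset.prod_le_prod (fun i _ => by positivity) (fun i _ => ?_)
            have h1 : (1 : ℝ) ≤ (dims i : ℝ) := by exact_mod_cast hdims i
            nlinarith
        _ = ((g : ℝ) + 1) ^ d * ∏ i, (dims i : ℝ) := by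
            rw [Finset.prod_mul_distrib, Finset.prod_const, Finset.card_fin]
    have hDR : ((g : ℝ) - 1) ^ d * ∏ i, (dims i : ℝ) ≤ (D : ℝ) := by
      have hcast : ((g - 1 : ℕ) : ℝ) = (g : ℝ) - 1 := by
        rw [Nat.cast_sub hg1]; norm_num
      have : (D : ℝ) = ∏ i, (((g : ℝ) - 1) * (dims i : ℝ) + 1) := by
        rw [hD, Nat.cast_prod]
        exact Finset.prod_congr rfl fun i _ => by push_cast [hcast]; ring
      rw [this]
      calc ((g : ℝ) - 1) ^ d * ∏ i, (dims i : ℝ)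
          = ∏ i, (((g : ℝ) - 1) * (dims i : ℝ)) := by
            rw [Finset.prod_mul_distrib, Finset.prod_const, Finset.card_fin]
        _ ≤ ∏ i, (((g : ℝ) - 1) * (dims i : ℝ) + 1) := by
            refine Finset.prod_le_prod (fun i _ => ?_) (fun i _ => by linarith)
            have h1 : (1 : ℝ) ≤ (g : ℝ) := by exact_mod_cast hg1
            exact mul_nonneg (by linarith) (Nat.cast_nonneg _)
    -- power estimate
    obtain ⟨k, hk⟩ : ∃ k, d = k + 1 := ⟨d - 1, by omega⟩
    have hgR1 : (1 : ℝ) ≤ (g : ℝ) := by exact_mod_cast hg1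
    have hpow : ((g : ℝ) + 1) ^ d - ((g : ℝ) - 1) ^ d ≤ (d : ℝ) * 2 ^ d * (g : ℝ) ^ k := by
      rw [hk]
      have h1 := pow_sub_pow_le' ((g : ℝ) + 1) ((g : ℝ) - 1) (by linarith) (by linarith) k
      have h2 : ((g : ℝ) + 1) ^ k ≤ (2 * (g : ℝ)) ^ k :=
        pow_le_pow_left₀ (by linarith) (by linarith) k
      have h3 : ((k : ℝ) + 1) * (((g : ℝ) + 1) - ((g : ℝ) - 1)) * ((g : ℝ) + 1) ^ k
          ≤ ((k : ℝ) + 1) * 2 * ((2 * (g : ℝ)) ^ k) := by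
        have hk1 : (0 : ℝ) ≤ (k : ℝ) + 1 := by positivity
        nlinarith [pow_nonneg (show (0:ℝ) ≤ (g:ℝ)+1 by linarith) k]
      have h4 : ((k : ℝ) + 1) * 2 * ((2 * (g : ℝ)) ^ k)
          = ((k + 1 : ℕ) : ℝ) * 2 ^ (k + 1) * (g : ℝ) ^ k := by
        rw [mul_pow]; push_cast; ring
      calc ((g : ℝ) + 1) ^ (k + 1) - ((g : ℝ) - 1) ^ (k + 1)
          ≤ ((k : ℝ) + 1) * (((g : ℝ) + 1) - ((g : ℝ) - 1)) * ((g : ℝ) + 1) ^ k := h1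
        _ ≤ ((k + 1 : ℕ) : ℝ) * 2 ^ (k + 1) * (g : ℝ) ^ k := by rw [← h4]; exact h3
    have hεg : (d : ℝ) * 2 ^ d ≤ ε * (g : ℝ) := by
      have h1 : (d : ℝ) * 2 ^ d / ε ≤ (⌈(d : ℝ) * 2 ^ d / ε⌉₊ : ℝ) := Nat.le_ceil _
      have h2 : ((⌈(d : ℝ) * 2 ^ d / ε⌉₊ : ℕ) : ℝ) ≤ (g : ℝ) := by
        rw [hg]; push_cast; linarith
      have h3 : (d : ℝ) * 2 ^ d / ε ≤ (g : ℝ) := le_trans h1 h2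
      calc (d : ℝ) * 2 ^ d = ((d : ℝ) * 2 ^ d / ε) * ε := by field_simp
        _ ≤ (g : ℝ) * ε := mul_le_mul_of_nonneg_right h3 (le_of_lt hε)
        _ = ε * (g : ℝ) := mul_comm _ _
    have hgk : (0 : ℝ) ≤ (g : ℝ) ^ k := by positivity
    calc ((gapSet d steps (fun i => g * dims i)).ncard : ℝ)
        ≤ (A : ℝ) - (D : ℝ) := stepR
      _ ≤ ((g : ℝ) + 1) ^ d * ∏ i, (dims i : ℝ) - ((g : ℝ) - 1) ^ d * ∏ i, (dims i : ℝ) := by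
          linarith
      _ = (((g : ℝ) + 1) ^ d - ((g : ℝ) - 1) ^ d) * ∏ i, (dims i : ℝ) := by ring
      _ ≤ ((d : ℝ) * 2 ^ d * (g : ℝ) ^ k) * ∏ i, (dims i : ℝ) :=
          mul_le_mul_of_nonneg_right hpow hprodpos
      _ ≤ (ε * (g : ℝ) * (g : ℝ) ^ k) * ∏ i, (dims i : ℝ) := by
          refine mul_le_mul_of_nonneg_right ?_ hprodpos
          exact mul_le_mul_of_nonneg_right hεg hgk
      _ = ε * (g : ℝ) ^ d * ∏ i, (dims i : ℝ) := by
          have hgd : (g : ℝ) ^ d = (g : ℝ) * (g : ℝ) ^ k := by rw [hk, pow_succ]; ring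
          rw [hgd, mul_assoc ε]
  · -- second bound
    have hvm2 : ∀ i, (v i).natAbs ≤ 2 * dims i := fun i => le_trans (hvdims i) (by omega)
    have count2 := counting d steps (fun i => 2 * dims i) v hv0 hvm2 hvs
    set E : ℕ := ∏ i, (2 * dims i + 1) with hE
    set C2 : ℕ := ∏ i, (2 * dims i + 1 - (v i).natAbs) with hC2
    set P : ℕ := ∏ i, (dims i + 1) with hP
    have hPC2 : P ≤ C2 := by
      refine Finset.prod_le_prod' fun i _ => ?_
      have := hvdims i
      omega
    have hC2E : C2 ≤ E := Finset.prod_le_prod' fun i _ => Nat.sub_le _ _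
    have hPE : P ≤ E := le_trans hPC2 hC2E
    have step : (gapSet d steps (fun i => 2 * dims i)).ncard ≤ E - P :=
      le_trans count2 (Nat.sub_le_sub_left hPC2 E)
    have stepR : ((gapSet d steps (fun i => 2 * dims i)).ncard : ℝ) ≤ (E : ℝ) - (P : ℝ) := by
      calc ((gapSet d steps (fun i => 2 * dims i)).ncard : ℝ) ≤ ((E - P : ℕ) : ℝ) :=
            Nat.cast_le.mpr step
        _ = (E : ℝ) - (P : ℝ) := by rw [Nat.cast_sub hPE]
    have hER : (E : ℝ) = ∏ i, (2 * (dims i : ℝ) + 1) := by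
      rw [hE, Nat.cast_prod]
      exact Finset.prod_congr rfl fun i _ => by push_cast; ring
    have hEP : (E : ℝ) ≤ 2 ^ (d + 1) * (P : ℝ) := by
      have h1 : (E : ℝ) ≤ 2 ^ d * (P : ℝ) := by
        rw [hE, hP]
        push_cast
        calc ∏ i, (2 * (dims i : ℝ) + 1)
            ≤ ∏ i, (2 * ((dims i : ℝ) + 1)) := by
              refine Finset.prod_le_prod (fun i _ => by positivity) (fun i _ => by linarith)
          _ = 2 ^ d * ∏ i, ((dims i : ℝ) + 1) := by
              rw [Finset.prod_mul_distrib, Finset.prod_const, Finset.card_fin]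
      have h2 : (0 : ℝ) ≤ (P : ℝ) := Nat.cast_nonneg _
      calc (E : ℝ) ≤ 2 ^ d * (P : ℝ) := h1
        _ ≤ 2 ^ (d + 1) * (P : ℝ) := by
            refine mul_le_mul_of_nonneg_right ?_ h2
            exact pow_le_pow_right₀ (by norm_num) (by omega)
    have hzpow : (2 : ℝ) ^ (-(d + 1 : ℤ)) = ((2 : ℝ) ^ (d + 1))⁻¹ := by
      rw [show (-(d + 1 : ℤ)) = -((d + 1 : ℕ) : ℤ) by push_cast; ring, zpow_neg, zpow_natCast]
    have hEpos : (0 : ℝ) ≤ (E : ℝ) := Nat.cast_nonneg _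
    have h2pos : (0 : ℝ) < 2 ^ (d + 1) := by positivity
    have hPinv : ((2 : ℝ) ^ (d + 1))⁻¹ * (E : ℝ) ≤ (P : ℝ) := by
      rw [inv_mul_le_iff₀ h2pos] at *
      · linarith [hEP]
    calc ((gapSet d steps (fun i => 2 * dims i)).ncard : ℝ)
        ≤ (E : ℝ) - (P : ℝ) := stepR
      _ ≤ (E : ℝ) - ((2 : ℝ) ^ (d + 1))⁻¹ * (E : ℝ) := by linarith
      _ = (1 - (2 : ℝ) ^ (-(d + 1 : ℤ))) * (E : ℝ) := by rw [hzpow]; ring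
      _ = (1 - (2 : ℝ) ^ (-(d + 1 : ℤ))) * ∏ i, (2 * (dims i : ℝ) + 1) := by rw [hER]
end

section
/- For every positive integer d and every positive integer g there exist a positive constant γ and a positive integer k (depending only on d and g) such that the following holds: let B be a finite set of integers, l a positive integer, and Q = {x_1·a_1 + ⋯ + x_d·a_d : x_i ∈ ℤ, 0 ≤ x_i ≤ n_i} a proper generalized arithmetic progression of rank d all of whose side lengths n_i are divisible by l. Assume (i) the l-fold sumset lB is covered by the union of g translates of Q, and (ii) the GAP kQ = {x_1·a_1 + ⋯ + x_d·a_d : 0 ≤ x_i ≤ k·n_i} is proper. Then there is an integer u such that |(u + B) ∩ (1/l)Q| ≥ γ·|B|, where (1/l)Q = {x_1·a_1 + ⋯ + x_d·a_d : x_i ∈ ℤ, 0 ≤ x_i ≤ n_i/l}. -/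
set_option maxHeartbeats 1000000

/-- The `l`-fold sumset `lB = {b₁ + ⋯ + b_l : bᵢ ∈ B}` (repetitions allowed). -/
def iterSum (B : Set ℤ) (l : ℕ) : Set ℤ :=
  {s | ∃ f : Fin l → ℤ, (∀ i, f i ∈ B) ∧ s = ∑ i, f i}

private lemma convex_mem {B : Finset ℤ} {l : ℕ} {b b' : ℤ}
    (hb : b ∈ B) (hb' : b' ∈ B) {j : ℕ} (hj : j ≤ l) :
    (j : ℤ) * b + ((l : ℤ) - (j : ℤ)) * b' ∈ iterSum (↑B) l := by
  refine ⟨fun i => if (i : ℕ) < j then b else b', fun i => ?_, ?_⟩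
  · dsimp only; split
    · exact hb
    · exact hb'
  · rw [Fin.sum_univ_eq_sum_range (fun i => if i < j then b else b') l,
      Finset.range_eq_Ico, ← Finset.sum_Ico_consecutive _ (Nat.zero_le j) hj]
    have h1 : (∑ i ∈ Finset.Ico 0 j, if i < j then b else b') = (j : ℤ) * b := by
      rw [Finset.sum_congr rfl (fun i hi => if_pos (Finset.mem_Ico.mp hi).2)]
      simp [Nat.card_Ico, nsmul_eq_mul]
    have h2 : (∑ i ∈ Finset.Ico j l, if i < j then b else b') = ((l : ℤ) - (j : ℤ)) * b' := by
      rw [Finset.sum_congr rfl (fun i hi => if_neg (not_lt.mpr (Finset.mem_Ico.mp hi).1))]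
      rw [Finset.sum_const, Nat.card_Ico, nsmul_eq_mul, Nat.cast_sub hj]
    rw [h1, h2]

private lemma pigeon {α β : Type*} [DecidableEq α] [Fintype β] [DecidableEq β] [Nonempty β]
    (s : Finset α) (f : α → β) :
    ∃ v : β, s.card ≤ Fintype.card β * (s.filter fun a => f a = v).card := by
  obtain ⟨v, -, hv⟩ := Finset.exists_mem_eq_sup (Finset.univ : Finset β) Finset.univ_nonempty
      (fun v => (s.filter fun a => f a = v).card)
  refine ⟨v, ?_⟩
  calc s.card = ∑ w ∈ Finset.univ, (s.filter fun a => f a = w).card :=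
        Finset.card_eq_sum_card_fiberwise (fun a _ => Finset.mem_univ (f a))
    _ ≤ Finset.univ.card • (s.filter fun a => f a = v).card := by
        refine Finset.sum_le_card_nsmul _ _ _ (fun x _ => ?_)
        rw [← hv]
        exact Finset.le_sup (f := fun w => (s.filter fun a => f a = w).card) (Finset.mem_univ x)
    _ = Fintype.card β * (s.filter fun a => f a = v).card := by
        rw [smul_eq_mul, Finset.card_univ]

private lemma diam_bound (d g : ℕ) (hg : 0 < g) (steps : Fin d → ℤ) (dims : Fin d → ℕ)
    (B : Finset ℤ) (l : ℕ) (hl : 0 < l) (t : Fin g → ℤ)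
    (hcov : iterSum (↑B) l ⊆ ⋃ j, (fun q => t j + q) '' gapSet d steps dims)
    (hprop : Set.InjOn (fun x : Fin d → ℕ => ∑ i, (x i : ℤ) * steps i)
      {x | ∀ i, x i ≤ 16 * g * dims i})
    {b b' : ℤ} (hb : b ∈ B) (hb' : b' ∈ B)
    (δ : Fin d → ℤ) (hδ : b - b' = ∑ i, δ i * steps i)
    (hδb : ∀ i, |δ i| ≤ (dims i : ℤ)) :
    ∀ i, (l : ℤ) * |δ i| ≤ 2 * g * dims i := by
  classical
  have hg' : (0:ℤ) < g := by exact_mod_cast hg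
  have hg1 : (1:ℤ) ≤ g := by exact_mod_cast hg
  haveI : Nonempty (Fin g) := ⟨⟨0, hg⟩⟩
  have stepA : ∀ J : ℕ, 1 ≤ J → J ≤ l →
      (∀ i, 4 * (J:ℤ) * |δ i| ≤ 16 * g * dims i) →
      ∃ e : ℕ, J + 1 ≤ g * (e + 1) ∧ ∀ i, (e:ℤ) * |δ i| ≤ (dims i : ℤ) := by
    intro J hJ1 hJl hJb
    have hex : ∀ j : ℕ, j ≤ J → ∃ p : Fin g × (Fin d → ℕ),
        (∀ i, p.2 i ≤ dims i) ∧
        (j:ℤ) * b + ((l:ℤ) - (j:ℤ)) * b' = t p.1 + ∑ i, (p.2 i : ℤ) * steps i := by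
      intro j hj
      have hm := hcov (convex_mem hb hb' (le_trans hj hJl))
      rw [Set.mem_iUnion] at hm
      obtain ⟨jj, hjj⟩ := hm
      rw [Set.mem_image] at hjj
      obtain ⟨q, hq, hq2⟩ := hjj
      rw [gapSet, Set.mem_image] at hq
      obtain ⟨z, hz, rfl⟩ := hq
      exact ⟨(jj, z), hz, hq2.symm⟩
    set F : ℕ → Fin g × (Fin d → ℕ) :=
      fun j => if h : j ≤ J then (hex j h).choose else (hex 0 (Nat.zero_le J)).choose with hF
    have hFs : ∀ j : ℕ, j ≤ J → (∀ i, (F j).2 i ≤ dims i) ∧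
        (j:ℤ) * b + ((l:ℤ) - (j:ℤ)) * b' = t (F j).1 + ∑ i, ((F j).2 i : ℤ) * steps i := by
      intro j hj
      simp only [hF, dif_pos hj]
      exact (hex j hj).choose_spec
    obtain ⟨v, hv⟩ := pigeon (Finset.range (J+1)) (fun j => (F j).1)
    set fib := (Finset.range (J+1)).filter (fun j => (F j).1 = v) with hfib
    rw [Finset.card_range, Fintype.card_fin] at hv
    have hpos : 0 < fib.card := by
      rcases Nat.eq_zero_or_pos fib.card with h | h
      · rw [h] at hv; omega
      · exact h
    have hfibne : fib.Nonempty := Finset.card_pos.mp hpos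
    set j₁ := fib.max' hfibne with hj₁
    set j₂ := fib.min' hfibne with hj₂
    have hj1m : j₁ ∈ fib := Finset.max'_mem _ _
    have hj2m : j₂ ∈ fib := Finset.min'_mem _ _
    have hle : j₂ ≤ j₁ := Finset.min'_le _ _ hj1m
    have hj1J : j₁ ≤ J := by
      have := (Finset.mem_filter.mp hj1m).1
      rw [Finset.mem_range] at this; omega
    have hj2J : j₂ ≤ J := le_trans hle hj1J
    refine ⟨j₁ - j₂, ?_, ?_⟩
    · have hsub : fib ⊆ Finset.Icc j₂ j₁ := fun x hx =>
        Finset.mem_Icc.mpr ⟨Finset.min'_le _ _ hx, Finset.le_max' _ _ hx⟩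
      have hcard : fib.card ≤ j₁ - j₂ + 1 := by
        have := Finset.card_le_card hsub
        rw [Nat.card_Icc] at this; omega
      calc J + 1 ≤ g * fib.card := hv
        _ ≤ g * (j₁ - j₂ + 1) := Nat.mul_le_mul_left _ hcard
    · intro i
      obtain ⟨hZ1b, hE1⟩ := hFs j₁ hj1J
      obtain ⟨hZ2b, hE2⟩ := hFs j₂ hj2J
      have hv1 : (F j₁).1 = v := (Finset.mem_filter.mp hj1m).2
      have hv2 : (F j₂).1 = v := (Finset.mem_filter.mp hj2m).2
      set Z₁ := (F j₁).2 with hZ₁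
      set Z₂ := (F j₂).2 with hZ₂
      set e := j₁ - j₂ with he
      have hecast : (e:ℤ) = (j₁:ℤ) - (j₂:ℤ) := by
        rw [he, Nat.cast_sub hle]
      rw [hv1] at hE1
      rw [hv2] at hE2
      have hkey : (e:ℤ) * (∑ i, δ i * steps i)
          = (∑ i, (Z₁ i : ℤ) * steps i) - ∑ i, (Z₂ i : ℤ) * steps i := by
        rw [hecast]
        linear_combination hE1 - hE2 - ((j₁:ℤ) - (j₂:ℤ)) * hδ
      have heJ : (e:ℤ) ≤ (J:ℤ) := by exact_mod_cast le_trans (Nat.sub_le _ _) hj1J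
      have habs : ∀ i, |(e:ℤ) * δ i| = (e:ℤ) * |δ i| := by
        intro i; rw [abs_mul, abs_of_nonneg (by positivity : (0:ℤ) ≤ (e:ℤ))]
      have hEδ : ∀ i, (e:ℤ) * |δ i| ≤ 4 * g * dims i := by
        intro i
        have h4 := hJb i
        nlinarith [abs_nonneg (δ i)]
      have hXnn : ∀ i, 0 ≤ (e:ℤ) * δ i + (Z₂ i : ℤ) + 4 * g * dims i := by
        intro i
        have h1 := hEδ i
        have h2 := neg_abs_le ((e:ℤ) * δ i)
        have h3 := habs i
        have h4 : (0:ℤ) ≤ (Z₂ i : ℤ) := Int.natCast_nonneg _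
        linarith
      set X : Fin d → ℕ := fun i => ((e:ℤ) * δ i + (Z₂ i : ℤ) + 4 * g * dims i).toNat with hX
      set Y : Fin d → ℕ := fun i => Z₁ i + 4 * g * dims i with hY
      have hXi : ∀ i, (X i : ℤ) = (e:ℤ) * δ i + (Z₂ i : ℤ) + 4 * g * dims i :=
        fun i => Int.toNat_of_nonneg (hXnn i)
      have hYi : ∀ i, (Y i : ℤ) = (Z₁ i : ℤ) + 4 * g * dims i := by
        intro i; rw [hY]; push_cast; ring
      have hXmem : X ∈ {x : Fin d → ℕ | ∀ i, x i ≤ 16 * g * dims i} := by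
        intro i
        have h1 : (X i : ℤ) ≤ 16 * g * dims i := by
          rw [hXi i]
          have h2 := hEδ i
          have h3 := le_abs_self ((e:ℤ) * δ i)
          have h4 : (Z₂ i : ℤ) ≤ dims i := by exact_mod_cast hZ2b i
          have h5 : (0:ℤ) ≤ (dims i : ℤ) := Int.natCast_nonneg _
          have h6 := habs i
          nlinarith
        exact_mod_cast h1
      have hYmem : Y ∈ {x : Fin d → ℕ | ∀ i, x i ≤ 16 * g * dims i} := by
        intro i
        have h4 : Z₁ i ≤ dims i := hZ1b i
        have : Z₁ i + 4 * g * dims i ≤ dims i + 4 * g * dims i := by omega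
        calc Y i ≤ dims i + 4 * g * dims i := this
          _ ≤ 16 * g * dims i := by nlinarith
      have hsum : (fun x : Fin d → ℕ => ∑ i, (x i : ℤ) * steps i) X
          = (fun x : Fin d → ℕ => ∑ i, (x i : ℤ) * steps i) Y := by
        dsimp only
        have hdiff : (∑ i, (X i : ℤ) * steps i) - (∑ i, (Y i : ℤ) * steps i)
            = (e:ℤ) * (∑ i, δ i * steps i)
              - ((∑ i, (Z₁ i : ℤ) * steps i) - ∑ i, (Z₂ i : ℤ) * steps i) := by
          rw [Finset.mul_sum, ← Finset.sum_sub_distrib, ← Finset.sum_sub_distrib,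
            ← Finset.sum_sub_distrib]
          refine Finset.sum_congr rfl (fun i _ => ?_)
          rw [hXi i, hYi i]; ring
        linarith [hdiff, hkey]
      have hXY : X = Y := hprop hXmem hYmem hsum
      have hXYi : (e:ℤ) * δ i + (Z₂ i : ℤ) + 4 * g * dims i = (Z₁ i : ℤ) + 4 * g * dims i := by
        rw [← hXi i, ← hYi i, hXY]
      have h1 : (e:ℤ) * δ i = (Z₁ i : ℤ) - (Z₂ i : ℤ) := by linarith
      have h2 : |(e:ℤ) * δ i| ≤ dims i := by
        rw [h1]
        have h3 : (Z₁ i : ℤ) ≤ dims i := by exact_mod_cast hZ1b i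
        have h4 : (0:ℤ) ≤ (Z₂ i : ℤ) := Int.natCast_nonneg _
        have h5 : (Z₂ i : ℤ) ≤ dims i := by exact_mod_cast hZ2b i
        have h6 : (0:ℤ) ≤ (Z₁ i : ℤ) := Int.natCast_nonneg _
        rw [abs_le]; constructor <;> linarith
      rw [← habs i]; exact h2
  have stepB : ∀ J : ℕ, 1 ≤ J → J ≤ l → (∀ i, 4 * (J:ℤ) * |δ i| ≤ 16 * g * dims i) →
      ∀ i, (J:ℤ) * |δ i| ≤ 2 * g * dims i := by
    intro J h1 h2 h3 i
    obtain ⟨e, hge, hee⟩ := stepA J h1 h2 h3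
    have hge' : (J:ℤ) + 1 ≤ g * (e + 1) := by exact_mod_cast hge
    have he1 := hee i
    have he2 := hδb i
    nlinarith [abs_nonneg (δ i), mul_le_mul_of_nonneg_right hge' (abs_nonneg (δ i)),
      mul_le_mul_of_nonneg_left he1 (le_of_lt hg'),
      mul_le_mul_of_nonneg_left he2 (le_of_lt hg')]
  have climb : ∀ fuel : ℕ, ∀ J : ℕ, 1 ≤ J → J ≤ l → l - J ≤ fuel →
      (∀ i, 4 * (J:ℤ) * |δ i| ≤ 16 * g * dims i) → ∀ i, (l:ℤ) * |δ i| ≤ 2 * g * dims i := by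
    intro fuel
    induction fuel with
    | zero =>
      intro J h1 h2 h3 h4 i
      have hJ : J = l := by omega
      subst hJ
      exact stepB J h1 h2 h4 i
    | succ n ih =>
      intro J h1 h2 h3 h4
      by_cases hJl : J = l
      · subst hJl
        exact stepB J h1 h2 h4
      · have hJlt : J < l := lt_of_le_of_ne h2 hJl
        have hB := stepB J h1 h2 h4
        have hmin : min l (2*J) ≤ 2*J := min_le_right _ _
        refine ih (min l (2*J)) (by omega) (min_le_left _ _) (by omega) (fun i => ?_)
        have hc : ((min l (2*J) : ℕ) : ℤ) ≤ 2 * (J:ℤ) := by exact_mod_cast hmin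
        have := hB i
        nlinarith [abs_nonneg (δ i), mul_le_mul_of_nonneg_right hc (abs_nonneg (δ i))]
  refine climb (l - 1) 1 le_rfl hl (by omega) (fun i => ?_)
  have := hδb i
  have h5 : (0:ℤ) ≤ (dims i : ℤ) := Int.natCast_nonneg _
  push_cast
  nlinarith [mul_le_mul_of_nonneg_right hg1 h5, mul_nonneg (le_of_lt hg') h5]

theorem covering_lemma (d g : ℕ) (hd : 0 < d) (hg : 0 < g) :
    ∃ (γ : ℝ) (k : ℕ), 0 < γ ∧ 0 < k ∧
      ∀ (B : Finset ℤ) (l : ℕ) (steps : Fin d → ℤ) (dims : Fin d → ℕ),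
        0 < l →
        (∀ i, l ∣ dims i) →
        Set.InjOn (fun x : Fin d → ℕ => ∑ i, (x i : ℤ) * steps i)
          {x | ∀ i, x i ≤ dims i} →
        (∃ t : Fin g → ℤ,
          iterSum (↑B) l ⊆ ⋃ j, (fun q => t j + q) '' gapSet d steps dims) →
        Set.InjOn (fun x : Fin d → ℕ => ∑ i, (x i : ℤ) * steps i)
          {x | ∀ i, x i ≤ k * dims i} →
        ∃ u : ℤ,
          γ * B.card ≤
            ((((fun b => u + b) '' (↑B : Set ℤ)) ∩
              gapSet d steps (fun i => dims i / l)).ncard : ℝ) := by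
  classical
  have h2g : 0 < 2 * g := by omega
  refine ⟨1 / ((g : ℝ) * (2 * g) ^ d), 16 * g, by positivity, by omega, ?_⟩
  intro B l steps dims hl hdiv hQ hcovEx hK
  obtain ⟨t, hcov⟩ := hcovEx
  rcases B.eq_empty_or_nonempty with hB | ⟨b₀, hb₀⟩
  · refine ⟨0, ?_⟩
    rw [hB]
    simp only [Finset.card_empty, Nat.cast_zero, mul_zero]
    exact Nat.cast_nonneg _
  -- Step 1: translate covering for single elements
  have hmem1 : ∀ b ∈ B, ∃ p : Fin g × (Fin d → ℕ),
      (∀ i, p.2 i ≤ dims i) ∧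
      b = (t p.1 - ((l : ℤ) - 1) * b₀) + ∑ i, (p.2 i : ℤ) * steps i := by
    intro b hb
    have h1 : (1 : ℕ) ≤ l := hl
    have hm := hcov (convex_mem hb hb₀ h1)
    rw [Set.mem_iUnion] at hm
    obtain ⟨jj, hjj⟩ := hm
    rw [Set.mem_image] at hjj
    obtain ⟨q, hq, hq2⟩ := hjj
    rw [gapSet, Set.mem_image] at hq
    obtain ⟨z, hz, rfl⟩ := hq
    refine ⟨(jj, z), hz, ?_⟩
    have : ((1:ℕ) : ℤ) * b + ((l : ℤ) - ((1:ℕ):ℤ)) * b₀ = t jj + ∑ i, (z i : ℤ) * steps i := hq2.symm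
    push_cast at this
    linarith
  set P : ℤ → Fin g × (Fin d → ℕ) :=
    fun b => if h : b ∈ B then (hmem1 b h).choose else (hmem1 b₀ hb₀).choose with hP
  have hPs : ∀ b ∈ B, (∀ i, (P b).2 i ≤ dims i) ∧
      b = (t (P b).1 - ((l : ℤ) - 1) * b₀) + ∑ i, ((P b).2 i : ℤ) * steps i := by
    intro b hb
    simp only [hP, dif_pos hb]
    exact (hmem1 b hb).choose_spec
  haveI : Nonempty (Fin g) := ⟨⟨0, hg⟩⟩
  obtain ⟨v₁, hv₁⟩ := pigeon B (fun b => (P b).1)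
  rw [Fintype.card_fin] at hv₁
  set B₁ := B.filter (fun b => (P b).1 = v₁) with hB₁
  have hB₁B : B₁ ⊆ B := Finset.filter_subset _ _
  set τ : ℤ := t v₁ - ((l : ℤ) - 1) * b₀ with hτ
  set w : ℤ → Fin d → ℕ := fun b => (P b).2 with hw
  have hwspec : ∀ b ∈ B₁, (∀ i, w b i ≤ dims i) ∧ b = τ + ∑ i, (w b i : ℤ) * steps i := by
    intro b hb
    obtain ⟨h1, h2⟩ := hPs b (hB₁B hb)
    have hv : (P b).1 = v₁ := (Finset.mem_filter.mp hb).2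
    rw [hv] at h2
    exact ⟨h1, h2⟩
  have hB₁ne : B₁.Nonempty := by
    rw [← Finset.card_pos]
    rcases Nat.eq_zero_or_pos B₁.card with h | h
    · rw [h, mul_zero] at hv₁
      have : 0 < B.card := Finset.card_pos.mpr ⟨b₀, hb₀⟩
      omega
    · exact h
  -- Step 2: diameter bound
  have hdiam : ∀ b ∈ B₁, ∀ b' ∈ B₁, ∀ i,
      (l : ℤ) * |(w b i : ℤ) - (w b' i : ℤ)| ≤ 2 * g * dims i := by
    intro b hb b' hb' i
    obtain ⟨hwb, heb⟩ := hwspec b hb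
    obtain ⟨hwb', heb'⟩ := hwspec b' hb'
    refine diam_bound d g hg steps dims B l hl t hcov hK (hB₁B hb) (hB₁B hb')
      (fun i => (w b i : ℤ) - (w b' i : ℤ)) ?_ ?_ i
    · show b - b' = ∑ i, ((w b i : ℤ) - (w b' i : ℤ)) * steps i
      have hsplit : (∑ i, ((w b i : ℤ) - (w b' i : ℤ)) * steps i)
          = (∑ i, (w b i : ℤ) * steps i) - ∑ i, (w b' i : ℤ) * steps i := by
        rw [← Finset.sum_sub_distrib]
        exact Finset.sum_congr rfl (fun i _ => by ring)
      rw [hsplit]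
      linarith [heb, heb']
    · intro i
      show |(w b i : ℤ) - (w b' i : ℤ)| ≤ (dims i : ℤ)
      have h1 : (0:ℤ) ≤ (w b i : ℤ) := Int.natCast_nonneg _
      have h2 : (0:ℤ) ≤ (w b' i : ℤ) := Int.natCast_nonneg _
      have h3 : (w b i : ℤ) ≤ dims i := by exact_mod_cast (hwspec b hb).1 i
      have h4 : (w b' i : ℤ) ≤ dims i := by exact_mod_cast (hwspec b' hb').1 i
      rw [abs_le]; constructor <;> linarith
  set D : Fin d → ℕ := fun i => dims i / l with hD
  have hDl : ∀ i, dims i = l * D i := fun i => (Nat.mul_div_cancel' (hdiv i)).symm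
  -- natural-number diameter bound
  have hdiamN : ∀ b ∈ B₁, ∀ b' ∈ B₁, ∀ i, w b i ≤ w b' i + 2 * g * D i := by
    intro b hb b' hb' i
    have h := hdiam b hb b' hb' i
    rw [hDl i] at h
    push_cast at h
    have h2 : ((w b i : ℤ) - (w b' i : ℤ)) ≤ |(w b i : ℤ) - (w b' i : ℤ)| := le_abs_self _
    have hl' : (0:ℤ) < l := by exact_mod_cast hl
    have h3 : (l:ℤ) * ((w b i : ℤ) - (w b' i : ℤ)) ≤ (l:ℤ) * (2 * g * D i) := by
      calc (l:ℤ) * ((w b i : ℤ) - (w b' i : ℤ)) ≤ (l:ℤ) * |(w b i : ℤ) - (w b' i : ℤ)| := by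
            exact mul_le_mul_of_nonneg_left h2 (le_of_lt hl')
        _ ≤ 2 * g * ((l:ℤ) * D i) := h
        _ = (l:ℤ) * (2 * g * D i) := by ring
    have h4 : ((w b i : ℤ) - (w b' i : ℤ)) ≤ 2 * g * D i := le_of_mul_le_mul_left h3 hl'
    have h5 : (w b i : ℤ) ≤ (w b' i : ℤ) + 2 * g * D i := by linarith
    exact_mod_cast h5
  -- min of coordinates
  set m : Fin d → ℕ := fun i => ((B₁.image fun b => w b i).min' (hB₁ne.image _)) with hm
  have hmle : ∀ b ∈ B₁, ∀ i, m i ≤ w b i := by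
    intro b hb i
    exact Finset.min'_le _ _ (Finset.mem_image_of_mem _ hb)
  have hub : ∀ b ∈ B₁, ∀ i, w b i ≤ m i + 2 * g * D i := by
    intro b hb i
    obtain ⟨b', hb', hb'e⟩ := Finset.mem_image.mp (Finset.min'_mem (B₁.image fun b => w b i) (hB₁ne.image _))
    rw [hm]
    dsimp only
    rw [← hb'e]
    exact hdiamN b hb b' hb' i
  -- classes
  haveI : Nonempty (Fin (2*g)) := ⟨⟨0, h2g⟩⟩
  set c : ℤ → (Fin d → Fin (2*g)) :=
    fun b i => ⟨(w b i - m i) / (D i + 1) % (2*g), Nat.mod_lt _ h2g⟩ with hc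
  obtain ⟨v₂, hv₂⟩ := pigeon B₁ c
  have hcardfun : Fintype.card (Fin d → Fin (2*g)) = (2*g)^d := by
    rw [Fintype.card_fun, Fintype.card_fin, Fintype.card_fin]
  rw [hcardfun] at hv₂
  set B₂ := B₁.filter (fun b => c b = v₂) with hB₂
  have hB₂B₁ : B₂ ⊆ B₁ := Finset.filter_subset _ _
  set offset : Fin d → ℕ := fun i => m i + (v₂ i : ℕ) * (D i + 1) with hoffdef
  have hoff : ∀ b ∈ B₂, ∀ i, offset i ≤ w b i ∧ w b i - offset i ≤ D i := by
    intro b hb i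
    have hb1 : b ∈ B₁ := hB₂B₁ hb
    have hcb : c b = v₂ := (Finset.mem_filter.mp hb).2
    have ha1 : m i ≤ w b i := hmle b hb1 i
    have ha2 : w b i ≤ m i + 2 * g * D i := hub b hb1 i
    set a := w b i - m i with haa
    have haub : a ≤ 2 * g * D i := by omega
    set q := a / (D i + 1) with hq
    have hql : q * (D i + 1) ≤ a := Nat.div_mul_le_self a _
    have haq : a < q * (D i + 1) + (D i + 1) := by
      rw [hq]
      exact Nat.lt_div_mul_add (Nat.succ_pos _)
    have hqlt : q < 2 * g := by
      rcases Nat.lt_or_ge q (2*g) with h | h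
      · exact h
      · exfalso
        have : 2 * g * (D i + 1) ≤ q * (D i + 1) := Nat.mul_le_mul_right _ h
        nlinarith
    have hvq : (v₂ i : ℕ) = q := by
      have := congrFun hcb i
      rw [hc] at this
      have h2 : q % (2*g) = (v₂ i : ℕ) := by
        have := congrArg Fin.val this
        exact this
      rw [← h2, Nat.mod_eq_of_lt hqlt]
    constructor
    · rw [hoffdef]; dsimp only; rw [hvq]; omega
    · rw [hoffdef]; dsimp only; rw [hvq]; omega
  -- final translate
  set u : ℤ := -τ - ∑ i, (offset i : ℤ) * steps i with hu
  refine ⟨u, ?_⟩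
  have hsubset : ((fun q => u + q) '' (↑B₂ : Set ℤ)) ⊆
      (((fun b => u + b) '' (↑B : Set ℤ)) ∩ gapSet d steps (fun i => dims i / l)) := by
    rintro x ⟨b, hb, rfl⟩
    have hbB₂ : b ∈ B₂ := hb
    have hbB₁ : b ∈ B₁ := hB₂B₁ hbB₂
    constructor
    · exact ⟨b, Finset.mem_coe.mpr (hB₁B hbB₁), rfl⟩
    · have heb := (hwspec b hbB₁).2
      have hcomp : u + b = ∑ i, ((w b i - offset i : ℕ) : ℤ) * steps i := by
        have hsplit2 : (∑ i, ((w b i - offset i : ℕ) : ℤ) * steps i)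
            = (∑ i, (w b i : ℤ) * steps i) - ∑ i, (offset i : ℤ) * steps i := by
          rw [← Finset.sum_sub_distrib]
          refine Finset.sum_congr rfl (fun i _ => ?_)
          rw [Nat.cast_sub (hoff b hbB₂ i).1]
          ring
        rw [hsplit2, hu]
        linarith [heb]
      refine ⟨fun i => w b i - offset i, fun i => (hoff b hbB₂ i).2, hcomp.symm⟩
  have hfin : ((((fun b => u + b) '' (↑B : Set ℤ)) ∩ gapSet d steps (fun i => dims i / l))).Finite :=
    Set.Finite.inter_of_left ((B.finite_toSet).image _) _
  have himgcard : ((fun q => u + q) '' (↑B₂ : Set ℤ)).ncard = B₂.card := by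
    rw [Set.ncard_image_of_injective _ (fun x y h => by simpa using h : Function.Injective (fun q : ℤ => u + q)),
      Set.ncard_coe_finset]
  have hle2 : (B₂.card : ℝ) ≤
      ((((fun b => u + b) '' (↑B : Set ℤ)) ∩ gapSet d steps (fun i => dims i / l)).ncard : ℝ) := by
    have := Set.ncard_le_ncard hsubset hfin
    rw [himgcard] at this
    exact_mod_cast this
  have hchain : B.card ≤ g * ((2*g)^d * B₂.card) := by
    calc B.card ≤ g * B₁.card := hv₁
      _ ≤ g * ((2*g)^d * B₂.card) := Nat.mul_le_mul_left _ hv₂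
  have hchainR : (B.card : ℝ) ≤ (g : ℝ) * (2*g : ℝ)^d * (B₂.card : ℝ) := by
    have : (B.card : ℝ) ≤ ((g * ((2*g)^d * B₂.card) : ℕ) : ℝ) := by exact_mod_cast hchain
    push_cast at this
    linarith [this]
  have hpos : (0:ℝ) < (g : ℝ) * (2*g : ℝ)^d := by positivity
  rw [div_mul_eq_mul_div, one_mul, div_le_iff₀ hpos]
  calc (B.card : ℝ) ≤ (g : ℝ) * (2*g : ℝ)^d * (B₂.card : ℝ) := hchainR
    _ ≤ ((((fun b => u + b) '' (↑B : Set ℤ)) ∩ gapSet d steps (fun i => dims i / l)).ncard : ℝ)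
        * ((g : ℝ) * (2*g : ℝ)^d) := by nlinarith [hle2, hpos]
end
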